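/- Correctness of the non-zero-indicator conflict abstraction: for every state n : ℕ and every pair of operations among inc, dec, and zero that do not commute at n, the access sets assigned to the two operations at n conflict, i.e., the variable v_zero occurs in both access sets with at least one of the two accesses a write. -/

import Mathlib

/-- The single variable of the NZI conflict abstraction. -/
inductive NZIVar where
  | vzero
deriving DecidableEq

/-- Access modes: read or write. -/
inductive AccessMode where
  | rd | wr
deriving DecidableEq

/-- The non-zero-indicator operations: `inc`, `dec`, `zero`. -/
inductive NZIOp where
  | inc | dec | zero

/-- Return values of NZI operations. -/
inductive NZIRet where
  | flag : Bool → NZIRet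
  | unit : NZIRet

/-- The effect of an operation on the abstract state `n : ℕ`
(`dec` uses truncated subtraction, so `0` stays `0`). -/
def NZIOp.applyState : NZIOp → ℕ → ℕ
  | .inc, n => n + 1
  | .dec, n => n - 1
  | .zero, n => n

/-- The value returned by an operation at a given state: `dec` returns a
failure flag that is `true` exactly when `n = 0`; `zero` returns the flag
`n = 0`; `inc` returns nothing. -/
def NZIOp.ret : NZIOp → ℕ → NZIRet
  | .inc, _ => .unit
  | .dec, n => .flag (decide (n = 0))
  | .zero, n => .flag (decide (n = 0))

/-- Two operations commute at `n` if executing them in either order yields the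
same final state and each operation returns the same value in both orders. -/
def NZIOp.CommutesAt (o₁ o₂ : NZIOp) (n : ℕ) : Prop :=
  o₂.applyState (o₁.applyState n) = o₁.applyState (o₂.applyState n) ∧
  o₁.ret n = o₁.ret (o₂.applyState n) ∧
  o₂.ret n = o₂.ret (o₁.applyState n)

/-- The conflict abstraction: the set of (variable, mode) accesses an operation
performs at state `n`. -/
def NZIOp.accesses : NZIOp → ℕ → Set (NZIVar × AccessMode)
  | .inc, n => if n = 0 then {(.vzero, .wr)} else {(.vzero, .rd)}
  | .dec, n => if n ≤ 1 then {(.vzero, .wr)} else {(.vzero, .rd)}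
  | .zero, _ => {(.vzero, .rd)}

/-- Two access sets conflict if some variable occurs in both with at least one
of the two accesses a write. -/
def Conflicts (A B : Set (NZIVar × AccessMode)) : Prop :=
  ∃ v m₁ m₂, (v, m₁) ∈ A ∧ (v, m₂) ∈ B ∧ (m₁ = AccessMode.wr ∨ m₂ = AccessMode.wr)

/-- **Correctness of the non-zero-indicator conflict abstraction**: any two
operations that do not commute at a state `n` have conflicting access sets;
since the only variable is `v_zero`, it occurs in both access sets with at
least one of the two accesses a write. -/
theorem nzi_conflictAbstraction_correct (n : ℕ) (o₁ o₂ : NZIOp)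
    (h : ¬ o₁.CommutesAt o₂ n) :
    Conflicts (o₁.accesses n) (o₂.accesses n) := by
  have wl : ∀ m, Conflicts {(NZIVar.vzero, AccessMode.wr)} {(NZIVar.vzero, m)} :=
    fun m => ⟨.vzero, .wr, m, rfl, rfl, Or.inl rfl⟩
  have wr : ∀ m, Conflicts {(NZIVar.vzero, m)} {(NZIVar.vzero, AccessMode.wr)} :=
    fun m => ⟨.vzero, m, .wr, rfl, rfl, Or.inr rfl⟩
  cases o₁ <;> cases o₂ <;>
    simp only [NZIOp.accesses] <;> (try split_ifs) <;>
    first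
      | exact wl _
      | exact wr _
      | (exfalso; apply h;
         refine ⟨?_, ?_, ?_⟩ <;>
           simp only [NZIOp.applyState, NZIOp.ret] <;>
           first
             | rfl
             | omega
             | (congr 1; exact decide_eq_decide.mpr (by omega)))
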